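/- arXiv:1606.01451 — 6 statements merged into one kernel-verified Lean document; each statement's English description precedes it below -/
import Mathlib

section
/- In a strictly alternating two-player reachability game arena whose transition relations are image-finite, if there exist a set A of configurations and a strict preorder ≻ such that (L1) the initial set I₀ is contained in A, (L2) A is inductive under both players' moves, and (L4) from every configuration x ∈ A \ F, for every Player-1 move x →₁ y with y ∉ F there exists a Player-2 move y →₂ z with z ∈ A and x ≻ z, and the relation ≻ restricted to A is well-founded, then Player 2 has a winning strategy to reach F from every configuration reachable from I₀. -/
structure Arena (S : Type*) where
  V1 : Set S
  V2 : Set S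
  r1 : S → S → Prop
  r2 : S → S → Prop

namespace Arena

variable {S : Type*}

/-- A strategy maps a history (whose head is the current configuration) to a
proposed next configuration. -/
abbrev Strat (S : Type*) := List S → S

open Classical in
/-- The play induced by a Player-1 strategy `f` and a Player-2 strategy `g`
from `s0`: at each step we record the current configuration together with the
full history (head = current configuration). -/
noncomputable def play (A : Arena S) (f g : Strat S) (s0 : S) : ℕ → S × List S
  | 0 => (s0, [s0])
  | n + 1 =>
    let p := A.play f g s0 n
    let x := if p.1 ∈ A.V1 then f p.2 else g p.2
    (x, x :: p.2)

/-- The configuration of the induced play at time `n`. -/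
noncomputable def cur (A : Arena S) (f g : Strat S) (s0 : S) (n : ℕ) : S :=
  (A.play f g s0 n).1

/-- A Player-1 strategy is legal if it picks an `r1`-successor whenever one exists. -/
def Legal1 (A : Arena S) (f : Strat S) : Prop :=
  ∀ (x : S) (h : List S), x ∈ A.V1 → (∃ y, A.r1 x y) → A.r1 x (f (x :: h))

/-- A Player-2 strategy is legal if it picks an `r2`-successor whenever one exists. -/
def Legal2 (A : Arena S) (g : Strat S) : Prop :=
  ∀ (x : S) (h : List S), x ∈ A.V2 → (∃ y, A.r2 x y) → A.r2 x (g (x :: h))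

/-- A step of the game: the owner of `x` makes a legal move to `y`. -/
def StepOK (A : Arena S) (x y : S) : Prop :=
  (x ∈ A.V1 ∧ A.r1 x y) ∨ (x ∈ A.V2 ∧ A.r2 x y)

/-- The induced play is a genuine (legal) play up to time `n`. -/
def ValidUpTo (A : Arena S) (f g : Strat S) (s0 : S) (n : ℕ) : Prop :=
  ∀ k < n, A.StepOK (A.cur f g s0 k) (A.cur f g s0 (k + 1))

/-- Player 2 wins the play induced by `f` and `g` from `s0`: at some finite time
the play (having been legal so far) visits `F`, or gets stuck in a Player-1
configuration (a Player-1 dead end). -/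
def P2WinsPlay (A : Arena S) (f g : Strat S) (F : Set S) (s0 : S) : Prop :=
  ∃ n, A.ValidUpTo f g s0 n ∧
    (A.cur f g s0 n ∈ F ∨ (A.cur f g s0 n ∈ A.V1 ∧ ∀ y, ¬ A.r1 (A.cur f g s0 n) y))

/-- `g` is a winning strategy for Player 2 from `s0` for the target set `F`. -/
def P2WinsFrom (A : Arena S) (g : Strat S) (F : Set S) (s0 : S) : Prop :=
  A.Legal2 g ∧ ∀ f, A.Legal1 f → A.P2WinsPlay f g F s0

/-- `f` is a winning strategy for Player 1 from `s0` (avoiding `F`). -/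
def P1WinsFrom (A : Arena S) (f : Strat S) (F : Set S) (s0 : S) : Prop :=
  A.Legal1 f ∧ ∀ g, A.Legal2 g → ¬ A.P2WinsPlay f g F s0

/-- A strategy is memoryless if its move depends only on the current configuration. -/
def Memoryless (g : Strat S) : Prop :=
  ∀ h₁ h₂ : List S, h₁.head? = h₂.head? → g h₁ = g h₂

/-- The global move relation `→` = `→₁ ∪ →₂`. -/
def step (A : Arena S) (x y : S) : Prop := A.r1 x y ∨ A.r2 x y

end Arena

section Aux

variable {S : Type*}

attribute [local instance] Classical.propDecidable

/-- Player 2's response function: from history `y :: x :: _`, answer using (L4). -/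
noncomputable def pickFn (A : Arena S) (Adv F : Set S) (succ : S → S → Prop)
    (hL4 : ∀ x, x ∈ Adv → x ∉ F → ∀ y, A.r1 x y → y ∉ F →
      ∃ z, A.r2 y z ∧ z ∈ Adv ∧ succ x z) (x y : S) : S :=
  if hc : x ∈ Adv ∧ x ∉ F ∧ A.r1 x y ∧ y ∉ F then
    (hL4 x hc.1 hc.2.1 y hc.2.2.1 hc.2.2.2).choose
  else if h2 : ∃ z, A.r2 y z then h2.choose else y

theorem pickFn_spec (A : Arena S) (Adv F : Set S) (succ : S → S → Prop)
    (hL4 : ∀ x, x ∈ Adv → x ∉ F → ∀ y, A.r1 x y → y ∉ F →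
      ∃ z, A.r2 y z ∧ z ∈ Adv ∧ succ x z) {x y : S}
    (h1 : x ∈ Adv) (h2 : x ∉ F) (h3 : A.r1 x y) (h4 : y ∉ F) :
    A.r2 y (pickFn A Adv F succ hL4 x y) ∧ pickFn A Adv F succ hL4 x y ∈ Adv ∧
      succ x (pickFn A Adv F succ hL4 x y) := by
  unfold pickFn
  rw [dif_pos ⟨h1, h2, h3, h4⟩]
  exact (hL4 x h1 h2 y h3 h4).choose_spec

theorem pickFn_legal (A : Arena S) (Adv F : Set S) (succ : S → S → Prop)
    (hL4 : ∀ x, x ∈ Adv → x ∉ F → ∀ y, A.r1 x y → y ∉ F →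
      ∃ z, A.r2 y z ∧ z ∈ Adv ∧ succ x z) (x y : S)
    (hz : ∃ z, A.r2 y z) : A.r2 y (pickFn A Adv F succ hL4 x y) := by
  unfold pickFn
  by_cases hc : x ∈ Adv ∧ x ∉ F ∧ A.r1 x y ∧ y ∉ F
  · rw [dif_pos hc]
    exact (hL4 x hc.1 hc.2.1 y hc.2.2.1 hc.2.2.2).choose_spec.1
  · rw [dif_neg hc, dif_pos hz]
    exact hz.choose_spec

/-- Fallback move. -/
noncomputable def fbFn (A : Arena S) (y : S) : S :=
  if h2 : ∃ z, A.r2 y z then h2.choose else y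

theorem fbFn_legal (A : Arena S) (y : S) (hz : ∃ z, A.r2 y z) :
    A.r2 y (fbFn A y) := by
  unfold fbFn
  rw [dif_pos hz]
  exact hz.choose_spec

/-- The full Player-2 strategy. -/
noncomputable def gStrat (A : Arena S) (Adv F : Set S) (succ : S → S → Prop)
    (hL4 : ∀ x, x ∈ Adv → x ∉ F → ∀ y, A.r1 x y → y ∉ F →
      ∃ z, A.r2 y z ∧ z ∈ Adv ∧ succ x z) (d : S) : Arena.Strat S
  | y :: x :: _ => pickFn A Adv F succ hL4 x y
  | [y] => fbFn A y
  | [] => d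

end Aux

/-- In a strictly alternating two-player reachability game arena with
image-finite transition relations, advice bits `⟨Adv, succ⟩` satisfying (L1), (L2), (L4),
with `succ` a strict preorder that is well-founded on `Adv`, guarantee that Player 2
has a winning strategy to reach `F` from every (Player-1) configuration reachable
from `I0`. -/
theorem stmt0 {S : Type*} (A : Arena S) (I0 F : Set S)
    -- partition of the configurations between the two players
    (hcover : A.V1 ∪ A.V2 = Set.univ) (hdisj : A.V1 ∩ A.V2 = ∅)
    (hpre1 : ∀ x y, A.r1 x y → x ∈ A.V1) (hpre2 : ∀ x y, A.r2 x y → x ∈ A.V2)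
    -- (A0) strict alternation
    (halt1 : ∀ x y, A.r1 x y → y ∉ A.V1) (halt2 : ∀ x y, A.r2 x y → y ∉ A.V2)
    -- (A1) initial and final configurations belong to Player 1
    (hI0 : I0 ⊆ A.V1) (hF : F ⊆ A.V1)
    -- (A2) no dead ends outside F
    (hnd : ∀ x, x ∉ F → ∃ y, A.step x y)
    -- image-finiteness
    (hfin1 : ∀ x, {y | A.r1 x y}.Finite) (hfin2 : ∀ x, {y | A.r2 x y}.Finite)
    -- the advice bits
    (Adv : Set S) (succ : S → S → Prop)
    -- succ is a strict preorder
    (hirr : Irreflexive succ) (htrans : Transitive succ)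
    -- (L1)
    (hL1 : I0 ⊆ Adv)
    -- (L2): Adv is inductive under both players' moves
    (hL2 : ∀ x y, x ∈ Adv → A.step x y → y ∈ Adv)
    -- (L4): progress condition
    (hL4 : ∀ x, x ∈ Adv → x ∉ F → ∀ y, A.r1 x y → y ∉ F →
      ∃ z, A.r2 y z ∧ z ∈ Adv ∧ succ x z)
    -- succ restricted to Adv is well-founded (no infinite succ-descending chains in Adv)
    (hwf : WellFounded (fun a b : S => a ∈ Adv ∧ b ∈ Adv ∧ succ b a)) :
    ∀ s, (∃ s0 ∈ I0, Relation.ReflTransGen A.step s0 s) → s ∈ A.V1 →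
      ∃ g, A.P2WinsFrom g F s := by
  classical
  intro s hs hsV1
  obtain ⟨s0, hs0, hsteps⟩ := hs
  have hsAdv : s ∈ Adv := by
    clear hsV1
    induction hsteps with
    | refl => exact hL1 hs0
    | tail _ h ih => exact hL2 _ _ ih h
  refine ⟨gStrat A Adv F succ hL4 s, ?_, ?_⟩
  · -- Legal2
    intro x h hx hex
    cases h with
    | nil => exact fbFn_legal A x hex
    | cons a t =>
      exact pickFn_legal A Adv F succ hL4 a x hex
  · intro f hf
    set g := gStrat A Adv F succ hL4 s with hg
    have hcur1 : ∀ n, A.cur f g s (n + 1) =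
        if A.cur f g s n ∈ A.V1 then f (A.play f g s n).2
        else g (A.play f g s n).2 := fun n => rfl
    have hsnd : ∀ n, (A.play f g s (n + 1)).2 =
        A.cur f g s (n + 1) :: (A.play f g s n).2 := fun n => rfl
    have hhead : ∀ n, ∃ t, (A.play f g s n).2 = A.cur f g s n :: t := by
      intro n
      cases n with
      | zero => exact ⟨[], rfl⟩
      | succ m => exact ⟨(A.play f g s m).2, rfl⟩
    have main : ∀ x, ∀ n, x ∈ Adv → x ∈ A.V1 → A.cur f g s n = x →
        A.ValidUpTo f g s n → A.P2WinsPlay f g F s := by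
      intro x
      induction x using WellFounded.induction hwf with
      | _ x IH =>
      intro n hxA hxV hcur hval
      by_cases hxF : x ∈ F
      · exact ⟨n, hval, Or.inl (hcur ▸ hxF)⟩
      · have hex1 : ∃ y, A.r1 x y := by
          obtain ⟨w, hw⟩ := hnd x hxF
          cases hw with
          | inl h => exact ⟨w, h⟩
          | inr h =>
            exact absurd (hdisj ▸ (⟨hxV, hpre2 _ _ h⟩ : x ∈ A.V1 ∩ A.V2))
              (Set.notMem_empty x)
        obtain ⟨tl, htl⟩ := hhead n
        have hp1 : (A.play f g s n).1 = x := hcur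
        have hy1 : A.r1 x (A.cur f g s (n + 1)) := by
          have hfx := hf x tl hxV hex1
          rw [hcur1 n, htl, hcur, if_pos hxV]
          exact hfx
        have hyV1 : A.cur f g s (n + 1) ∉ A.V1 := halt1 _ _ hy1
        have hyV2 : A.cur f g s (n + 1) ∈ A.V2 := by
          have hm : A.cur f g s (n + 1) ∈ A.V1 ∪ A.V2 :=
            hcover ▸ Set.mem_univ _
          exact hm.resolve_left hyV1
        have hyF : A.cur f g s (n + 1) ∉ F := fun h => hyV1 (hF h)
        have hsnd1 : (A.play f g s (n + 1)).2 =
            A.cur f g s (n + 1) :: x :: tl := by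
          rw [hsnd n, htl, hcur]
        have hcur2 : A.cur f g s (n + 2) =
            pickFn A Adv F succ hL4 x (A.cur f g s (n + 1)) := by
          rw [hcur1 (n + 1), if_neg hyV1, hsnd1]
          rfl
        obtain ⟨hz2, hzAdv, hzsucc⟩ :=
          pickFn_spec A Adv F succ hL4 hxA hxF hy1 hyF
        have hzV1 : pickFn A Adv F succ hL4 x (A.cur f g s (n + 1)) ∈ A.V1 := by
          have hm : pickFn A Adv F succ hL4 x (A.cur f g s (n + 1)) ∈ A.V1 ∪ A.V2 :=
            hcover ▸ Set.mem_univ _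
          exact hm.resolve_right (halt2 _ _ hz2)
        have hval2 : A.ValidUpTo f g s (n + 2) := by
          intro k hk
          rcases (by omega : k < n ∨ k = n ∨ k = n + 1) with h | h | h
          · exact hval k h
          · subst h
            exact Or.inl ⟨hcur ▸ hxV, hcur ▸ hy1⟩
          · subst h
            exact Or.inr ⟨hyV2, hcur2 ▸ hz2⟩
        exact IH _ ⟨hzAdv, hxA, hzsucc⟩ (n + 2) hzAdv hzV1 hcur2 hval2
    exact main s 0 hsAdv hsV1 rfl (fun k hk => absurd hk (Nat.not_lt_zero k))
end

section
/- In a strictly alternating image-finite two-player reachability game arena satisfying the no-dead-end condition, if Player 2 has a winning strategy to reach F from every configuration in post_{→*}(I₀) ∩ V₁, then there exist a set A of configurations and a strict preorder ≻ on configurations such that: I₀ ⊆ A; A is closed under →; and for all x ∈ A \ F and all y ∉ F with x →₁ y, there exists z ∈ A with y →₂ z and x ≻ z. -/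
namespace Arena

variable {S : Type*}

/-- Player-2 attractor levels towards `F`. -/
def Attr (A : Arena S) (F : Set S) : ℕ → Set S
  | 0 => F
  | n + 1 => Attr A F n ∪
      {x | x ∈ A.V1 ∧ ∀ y, A.r1 x y → ∃ z, A.r2 y z ∧ z ∈ Attr A F n}

lemma Attr_mono (A : Arena S) (F : Set S) : Monotone (A.Attr F) :=
  monotone_nat_of_le_succ fun _ => Set.subset_union_left

lemma play_snd (A : Arena S) (f g : Strat S) (s : S) (n : ℕ) :
    ∃ t, (A.play f g s n).2 = (A.play f g s n).1 :: t := by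
  induction n with
  | zero => exact ⟨[], rfl⟩
  | succ n _ => exact ⟨(A.play f g s n).2, rfl⟩

lemma mem_attr_of_win (A : Arena S) (F : Set S)
    (hcover : A.V1 ∪ A.V2 = Set.univ) (hdisj : A.V1 ∩ A.V2 = ∅)
    (hpre2 : ∀ x y, A.r2 x y → x ∈ A.V2)
    (halt1 : ∀ x y, A.r1 x y → y ∉ A.V1) (halt2 : ∀ x y, A.r2 x y → y ∉ A.V2)
    (hF : F ⊆ A.V1)
    (hnd : ∀ x, x ∉ F → ∃ y, A.step x y)
    (hfin1 : ∀ x, {y | A.r1 x y}.Finite)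
    (s : S) (hs : s ∈ A.V1) (g : Strat S) (hg : A.P2WinsFrom g F s) :
    ∃ n, s ∈ A.Attr F n := by
  classical
  by_contra hcon
  push_neg at hcon
  have hV2 : ∀ x, x ∉ A.V1 → x ∈ A.V2 := by
    intro x hx
    have h : x ∈ A.V1 ∪ A.V2 := hcover ▸ Set.mem_univ x
    rcases h with h | h
    · exact absurd h hx
    · exact h
  have hndisj : ∀ x, x ∈ A.V1 → x ∉ A.V2 := by
    intro x h1 h2
    have : x ∈ A.V1 ∩ A.V2 := ⟨h1, h2⟩
    simp [hdisj] at this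
  have C : ∀ x, x ∈ A.V1 → (∀ n, x ∉ A.Attr F n) →
      ∃ y, A.r1 x y ∧ ∀ z, A.r2 y z → ∀ n, z ∉ A.Attr F n := by
    intro x hx hbx
    by_contra hc
    push_neg at hc
    have key : ∀ y, ∃ n, A.r1 x y → ∃ z, A.r2 y z ∧ z ∈ A.Attr F n := by
      intro y
      by_cases hy : A.r1 x y
      · obtain ⟨z, hz, n, hn⟩ := hc y hy
        exact ⟨n, fun _ => ⟨z, hz, hn⟩⟩
      · exact ⟨0, fun h => absurd h hy⟩
    choose nf hnf using key
    set N := (hfin1 x).toFinset.sup nf with hN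
    have hxA : x ∈ A.Attr F (N + 1) := by
      refine Set.mem_union_right _ ⟨hx, fun y hy => ?_⟩
      obtain ⟨z, hz, hzn⟩ := hnf y hy
      exact ⟨z, hz, Attr_mono A F
        (Finset.le_sup (f := nf) ((hfin1 x).mem_toFinset.mpr hy)) hzn⟩
    exact hbx (N + 1) hxA
  let F0 : S → S := fun x =>
    if h : x ∈ A.V1 ∧ ∀ n, x ∉ A.Attr F n then Classical.choose (C x h.1 h.2)
    else if h2 : ∃ y, A.r1 x y then Classical.choose h2 else x
  let f : Strat S := fun l => match l with | [] => s | x :: _ => F0 x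
  have hF0 : ∀ x (h : x ∈ A.V1 ∧ ∀ n, x ∉ A.Attr F n),
      A.r1 x (F0 x) ∧ ∀ z, A.r2 (F0 x) z → ∀ n, z ∉ A.Attr F n := by
    intro x h
    simp only [F0, dif_pos h]
    exact Classical.choose_spec (C x h.1 h.2)
  have hlegal : A.Legal1 f := by
    intro x h hx hex
    show A.r1 x (F0 x)
    by_cases hb : x ∈ A.V1 ∧ ∀ n, x ∉ A.Attr F n
    · exact (hF0 x hb).1
    · simp only [F0, dif_neg hb, dif_pos hex]
      exact Classical.choose_spec hex
  obtain ⟨hg2, hgwin⟩ := hg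
  obtain ⟨n, hval, hend⟩ := hgwin f hlegal
  have inv : ∀ m, A.ValidUpTo f g s m →
      (A.cur f g s m ∈ A.V1 ∧ ∀ k, A.cur f g s m ∉ A.Attr F k) ∨
      (A.cur f g s m ∈ A.V2 ∧
        ∀ z, A.r2 (A.cur f g s m) z → ∀ k, z ∉ A.Attr F k) := by
    intro m
    induction m with
    | zero => intro _; exact Or.inl ⟨hs, hcon⟩
    | succ m ih =>
      intro hv
      have hvm : A.ValidUpTo f g s m := fun k hk => hv k (Nat.lt_succ_of_lt hk)
      have hstep := hv m (Nat.lt_succ_self m)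
      rcases ih hvm with ⟨h1, hb⟩ | ⟨h2, hb⟩
      · have hcur : A.cur f g s (m + 1) = F0 (A.cur f g s m) := by
          obtain ⟨t, ht⟩ := A.play_snd f g s m
          show (A.play f g s (m + 1)).1 = _
          simp only [Arena.play, ht]
          rw [if_pos (show (A.play f g s m).1 ∈ A.V1 from h1)]
          rfl
        obtain ⟨hr1, hz⟩ := hF0 _ ⟨h1, hb⟩
        rw [hcur]
        exact Or.inr ⟨hV2 _ (halt1 _ _ hr1), hz⟩
      · rcases hstep with ⟨h1', _⟩ | ⟨_, hr2⟩
        · exact absurd h2 (hndisj _ h1')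
        · have hb' := hb _ hr2
          have hv1 : A.cur f g s (m + 1) ∈ A.V1 := by
            by_contra h
            exact halt2 _ _ hr2 (hV2 _ h)
          exact Or.inl ⟨hv1, hb'⟩
  rcases inv n hval with ⟨h1, hb⟩ | ⟨h2, hb⟩
  · rcases hend with hf | ⟨_, hstuck⟩
    · exact hb 0 hf
    · have hnF : A.cur f g s n ∉ F := hb 0
      obtain ⟨y, hy | hy⟩ := hnd _ hnF
      · exact hstuck y hy
      · exact hndisj _ h1 (hpre2 _ _ hy)
  · rcases hend with hf | ⟨h1, _⟩
    · exact hndisj _ (hF hf) h2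
    · exact hndisj _ h1 h2

end Arena

/-- (Completeness direction.) In a strictly alternating, image-finite
reachability game arena with no dead ends outside `F`, if Player 2 has a winning
strategy from every configuration in `post_{→*}(I0) ∩ V1`, then there exist advice
bits: a set `Adv` and a strict preorder `succ` satisfying (L1), (L2) and (L4). -/
theorem stmt1 {S : Type*} (A : Arena S) (I0 F : Set S)
    (hcover : A.V1 ∪ A.V2 = Set.univ) (hdisj : A.V1 ∩ A.V2 = ∅)
    (hpre1 : ∀ x y, A.r1 x y → x ∈ A.V1) (hpre2 : ∀ x y, A.r2 x y → x ∈ A.V2)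
    (halt1 : ∀ x y, A.r1 x y → y ∉ A.V1) (halt2 : ∀ x y, A.r2 x y → y ∉ A.V2)
    (hI0 : I0 ⊆ A.V1) (hF : F ⊆ A.V1)
    (hnd : ∀ x, x ∉ F → ∃ y, A.step x y)
    (hfin1 : ∀ x, {y | A.r1 x y}.Finite) (hfin2 : ∀ x, {y | A.r2 x y}.Finite)
    -- Player 2 wins from every reachable Player-1 configuration
    (hwin : ∀ s, (∃ s0 ∈ I0, Relation.ReflTransGen A.step s0 s) → s ∈ A.V1 →
      ∃ g, A.P2WinsFrom g F s) :
    ∃ (Adv : Set S) (succ : S → S → Prop),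
      Irreflexive succ ∧ Transitive succ ∧
      I0 ⊆ Adv ∧
      (∀ x y, x ∈ Adv → A.step x y → y ∈ Adv) ∧
      (∀ x, x ∈ Adv → x ∉ F → ∀ y, A.r1 x y → y ∉ F →
        ∃ z, z ∈ Adv ∧ A.r2 y z ∧ succ x z) := by
  classical
  set Adv : Set S := {s | ∃ s0 ∈ I0, Relation.ReflTransGen A.step s0 s} with hAdv
  have hrank : ∀ x, x ∈ Adv → x ∈ A.V1 → ∃ n, x ∈ A.Attr F n := by
    intro x hx hx1
    obtain ⟨g, hg⟩ := hwin x hx hx1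
    exact A.mem_attr_of_win F hcover hdisj hpre2 halt1 halt2 hF hnd hfin1 x hx1 g hg
  set ρ : S → ℕ := fun x => if h : ∃ n, x ∈ A.Attr F n then Nat.find h else 0 with hρ
  refine ⟨Adv, fun x z => ρ z < ρ x, fun x => lt_irrefl _,
    fun a b c hab hbc => lt_trans hbc hab, ?_, ?_, ?_⟩
  · intro x hx; exact ⟨x, hx, Relation.ReflTransGen.refl⟩
  · rintro x y ⟨s0, hs0, hrt⟩ hstep; exact ⟨s0, hs0, hrt.tail hstep⟩
  · intro x hx hxF y hr1 hyF
    have hx1 : x ∈ A.V1 := hpre1 _ _ hr1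
    have hex := hrank x hx hx1
    have hxn : x ∈ A.Attr F (Nat.find hex) := Nat.find_spec hex
    have hn0 : Nat.find hex ≠ 0 := by
      intro h
      rw [h] at hxn
      exact hxF hxn
    obtain ⟨m, hm⟩ := Nat.exists_eq_succ_of_ne_zero hn0
    have hxm : x ∉ A.Attr F m := Nat.find_min hex (by omega)
    rw [hm] at hxn
    rcases hxn with h | ⟨_, hall⟩
    · exact absurd h hxm
    · obtain ⟨z, hz2, hzm⟩ := hall y hr1
      have hy : y ∈ Adv := by
        obtain ⟨s0, hs0, hrt⟩ := hx; exact ⟨s0, hs0, hrt.tail (Or.inl hr1)⟩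
      have hzAdv : z ∈ Adv := by
        obtain ⟨s0, hs0, hrt⟩ := hy; exact ⟨s0, hs0, hrt.tail (Or.inr hz2)⟩
      refine ⟨z, hzAdv, hz2, ?_⟩
      have hez : ∃ k, z ∈ A.Attr F k := ⟨m, hzm⟩
      have hρz : ρ z ≤ m := by
        simp only [hρ, dif_pos hez]
        exact Nat.find_min' hez hzm
      have hρx : ρ x = Nat.find hex := by simp only [hρ, dif_pos hex]
      omega
end

section
/- In a two-player reachability game on a possibly infinite arena, if Player 2 has a winning strategy to reach the target set F from a configuration s₀, then Player 2 has a memoryless winning strategy from s₀. -/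
universe u

namespace Stmt2Aux

open Arena

variable {S : Type u}

/-- Ordinal-indexed attractor levels for Player 2 towards `F`. -/
def AttrO (A : Arena S) (F : Set S) (o : Ordinal.{u}) (x : S) : Prop :=
  x ∈ F ∨ (x ∈ A.V1 ∧ ∀ y, ¬ A.r1 x y) ∨
  (x ∈ A.V2 ∧ ∃ y, A.r2 x y ∧ ∃ o' : {o' : Ordinal.{u} // o' < o}, AttrO A F o'.1 y) ∨
  (x ∈ A.V1 ∧ (∃ y, A.r1 x y) ∧ ∀ y, A.r1 x y → ∃ o' : {o' : Ordinal.{u} // o' < o}, AttrO A F o'.1 y)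
termination_by o
decreasing_by all_goals exact o'.2

/-- The attractor of `F` for Player 2. -/
def Attr (A : Arena S) (F : Set S) (x : S) : Prop := ∃ o, AttrO A F o x

/-- The rank of a configuration in the attractor. -/
noncomputable def rank (A : Arena S) (F : Set S) (x : S) : Ordinal.{u} :=
  sInf {o | AttrO A F o x}

lemma attrO_rank {A : Arena S} {F : Set S} {x : S} (h : Attr A F x) :
    AttrO A F (rank A F x) x := csInf_mem h

lemma rank_le {A : Arena S} {F : Set S} {x : S} {o : Ordinal.{u}}
    (h : AttrO A F o x) : rank A F x ≤ o := csInf_le' h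

lemma attr_of_mem {A : Arena S} {F : Set S} {x : S} (hx : x ∈ F) : Attr A F x :=
  ⟨0, by rw [AttrO.eq_def]; exact Or.inl hx⟩

lemma attr_dead {A : Arena S} {F : Set S} {x : S} (h1 : x ∈ A.V1)
    (h : ∀ y, ¬ A.r1 x y) : Attr A F x :=
  ⟨0, by rw [AttrO.eq_def]; exact Or.inr (Or.inl ⟨h1, h⟩)⟩

lemma attr_v2 {A : Arena S} {F : Set S} {x y : S} (h2 : x ∈ A.V2)
    (hr : A.r2 x y) (hy : Attr A F y) : Attr A F x := by
  refine ⟨Order.succ (rank A F y), ?_⟩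
  rw [AttrO.eq_def]
  exact Or.inr (Or.inr (Or.inl ⟨h2, y, hr, ⟨⟨rank A F y, Order.lt_succ _⟩, attrO_rank hy⟩⟩))

lemma attr_v1 {A : Arena S} {F : Set S} {x : S} (h1 : x ∈ A.V1)
    (hne : ∃ y, A.r1 x y) (hall : ∀ y, A.r1 x y → Attr A F y) : Attr A F x := by
  refine ⟨⨆ y : {y // A.r1 x y}, Order.succ (rank A F y.1), ?_⟩
  rw [AttrO.eq_def]
  refine Or.inr (Or.inr (Or.inr ⟨h1, hne, fun y hy => ⟨⟨rank A F y, ?_⟩, attrO_rank (hall y hy)⟩⟩))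
  exact lt_of_lt_of_le (Order.lt_succ _)
    (le_ciSup (Ordinal.bddAbove_range _) (⟨y, hy⟩ : {y // A.r1 x y}))

lemma play_snd (A : Arena S) (f g : Strat S) (s0 : S) (n : ℕ) :
    ∃ t, (A.play f g s0 n).2 = (A.play f g s0 n).1 :: t := by
  cases n with
  | zero => exact ⟨[], rfl⟩
  | succ n => exact ⟨(A.play f g s0 n).2, rfl⟩

open Classical in
lemma cur_succ (A : Arena S) (f g : Strat S) (s0 : S) (n : ℕ) :
    A.cur f g s0 (n + 1) =
      if (A.play f g s0 n).1 ∈ A.V1 then f (A.play f g s0 n).2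
      else g (A.play f g s0 n).2 := rfl

lemma valid_succ {A : Arena S} {f g : Strat S} {s0 : S} {n : ℕ}
    (h : A.ValidUpTo f g s0 n)
    (hs : A.StepOK (A.cur f g s0 n) (A.cur f g s0 (n + 1))) :
    A.ValidUpTo f g s0 (n + 1) := by
  intro k hk
  rcases Nat.lt_succ_iff_lt_or_eq.mp hk with h' | h'
  · exact h k h'
  · subst h'; exact hs

lemma not_mem_V1 {A : Arena S} (hdisj : A.V1 ∩ A.V2 = ∅) {x : S}
    (h2 : x ∈ A.V2) : x ∉ A.V1 := fun h1 => by
  have : x ∈ A.V1 ∩ A.V2 := ⟨h1, h2⟩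
  rw [hdisj] at this; exact this

open Classical in
/-- The memoryless strategy for Player 2. -/
noncomputable def g0 (A : Arena S) (F : Set S) (d : S) : Strat S := fun l =>
  match l.head? with
  | none => d
  | some x =>
    if h : ∃ y, A.r2 x y ∧ Attr A F y ∧ rank A F y < rank A F x then h.choose
    else if h2 : ∃ y, A.r2 x y then h2.choose else d

lemma g0_memoryless (A : Arena S) (F : Set S) (d : S) : Memoryless (g0 A F d) := by
  intro h1 h2 he
  unfold g0
  rw [he]

lemma g0_legal2 (A : Arena S) (F : Set S) (d : S) : A.Legal2 (g0 A F d) := by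
  intro x h hx hex
  show A.r2 x (g0 A F d (x :: h))
  unfold g0
  simp only [List.head?_cons]
  by_cases h1 : ∃ y, A.r2 x y ∧ Attr A F y ∧ rank A F y < rank A F x
  · rw [dif_pos h1]; exact h1.choose_spec.1
  · rw [dif_neg h1, dif_pos hex]; exact hex.choose_spec

open Classical in
/-- Player 1's escape strategy used in the converse direction. -/
noncomputable def fesc (A : Arena S) (F : Set S) (d : S) : Strat S := fun l =>
  match l.head? with
  | none => d
  | some x =>
    if h : ∃ y, A.r1 x y ∧ ¬ Attr A F y then h.choose
    else if h2 : ∃ y, A.r1 x y then h2.choose else d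

lemma fesc_legal1 (A : Arena S) (F : Set S) (d : S) : A.Legal1 (fesc A F d) := by
  intro x h hx hex
  show A.r1 x (fesc A F d (x :: h))
  unfold fesc
  simp only [List.head?_cons]
  by_cases h1 : ∃ y, A.r1 x y ∧ ¬ Attr A F y
  · rw [dif_pos h1]; exact h1.choose_spec.1
  · rw [dif_neg h1, dif_pos hex]; exact hex.choose_spec

lemma attr_of_win (A : Arena S) (F : Set S) (s0 : S)
    (hdisj : A.V1 ∩ A.V2 = ∅)
    (hwin : ∃ g, A.P2WinsFrom g F s0) : Attr A F s0 := by
  by_contra hn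
  obtain ⟨g, hleg, hw⟩ := hwin
  obtain ⟨m, hvalid, hwinm⟩ := hw (fesc A F s0) (fesc_legal1 A F s0)
  set f := fesc A F s0 with hf
  have key : ∀ k, k ≤ m → ¬ Attr A F (A.cur f g s0 k) := by
    intro k
    induction k with
    | zero => intro _; exact hn
    | succ k IH =>
      intro hk
      have hNA := IH (le_of_lt (Nat.lt_of_succ_le hk))
      have hstep := hvalid k (Nat.lt_of_succ_le hk)
      obtain ⟨t, ht⟩ := play_snd A f g s0 k
      rcases hstep with ⟨hx1, hr1⟩ | ⟨hx2, hr2⟩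
      · -- Player 1 moved
        have hC : ∃ y, A.r1 ((A.play f g s0 k).1) y ∧ ¬ Attr A F y := by
          by_contra hC
          push_neg at hC
          exact hNA (attr_v1 hx1 ⟨_, hr1⟩ hC)
        have hx1' : (A.play f g s0 k).1 ∈ A.V1 := hx1
        have hcur : A.cur f g s0 (k + 1) = hC.choose := by
          rw [cur_succ, if_pos hx1', ht]
          show fesc A F s0 ((A.play f g s0 k).1 :: t) = hC.choose
          unfold fesc
          simp only [List.head?_cons]
          rw [dif_pos hC]
        rw [hcur]
        exact hC.choose_spec.2
      · -- Player 2 moved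
        intro hA
        exact hNA (attr_v2 hx2 hr2 hA)
  rcases hwinm with hF | ⟨h1, hd⟩
  · exact key m le_rfl (attr_of_mem hF)
  · exact key m le_rfl (attr_dead h1 hd)

lemma g0_wins (A : Arena S) (F : Set S) (s0 d : S)
    (hdisj : A.V1 ∩ A.V2 = ∅) :
    ∀ (o : Ordinal.{u}) (x : S), Attr A F x → rank A F x = o →
      ∀ (f : Strat S), A.Legal1 f → ∀ n, A.cur f (g0 A F d) s0 n = x →
        A.ValidUpTo f (g0 A F d) s0 n → A.P2WinsPlay f (g0 A F d) F s0 := by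
  intro o
  induction o using Ordinal.induction with
  | h o IH =>
    intro x hx hro f hf n hcur hvalid
    set g := g0 A F d with hg
    have hAO := attrO_rank hx
    rw [AttrO.eq_def] at hAO
    obtain ⟨t, ht⟩ := play_snd A f g s0 n
    have hcur' : (A.play f g s0 n).1 = x := hcur
    rcases hAO with hF | ⟨h1, hdead⟩ | ⟨h2, y, hr2, ⟨o', ho'⟩, hAy⟩ | ⟨h1, hne, hall⟩
    · exact ⟨n, hvalid, Or.inl (hcur ▸ hF)⟩
    · exact ⟨n, hvalid, Or.inr ⟨hcur ▸ h1, hcur ▸ hdead⟩⟩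
    · -- Player 2's node: g0 moves down in rank
      have hC : ∃ y, A.r2 x y ∧ Attr A F y ∧ rank A F y < rank A F x :=
        ⟨y, hr2, ⟨o', hAy⟩, lt_of_le_of_lt (rank_le hAy) ho'⟩
      have hnv1 : x ∉ A.V1 := not_mem_V1 hdisj h2
      have hc1 : A.cur f g s0 (n + 1) = hC.choose := by
        have hnv1' : (A.play f g s0 n).1 ∉ A.V1 := fun h => hnv1 (hcur' ▸ h)
        rw [cur_succ, if_neg hnv1', ht, hcur']
        show g0 A F d (x :: t) = hC.choose
        unfold g0
        simp only [List.head?_cons]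
        rw [dif_pos hC]
      obtain ⟨hry, hAty, hrk⟩ := hC.choose_spec
      have hvalid' : A.ValidUpTo f g s0 (n + 1) :=
        valid_succ hvalid (Or.inr ⟨hcur ▸ h2, by rw [hcur, hc1]; exact hry⟩)
      exact IH (rank A F hC.choose) (hro ▸ hrk) hC.choose hAty rfl f hf (n + 1) hc1 hvalid'
    · -- Player 1's node: every move goes down in rank
      have hc1 : A.cur f g s0 (n + 1) = f (x :: t) := by
        have h1' : (A.play f g s0 n).1 ∈ A.V1 := hcur' ▸ h1
        rw [cur_succ, if_pos h1', ht, hcur']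
      have hry : A.r1 x (f (x :: t)) := hf x t h1 hne
      obtain ⟨⟨o', ho'⟩, hAy⟩ := hall _ hry
      have hAty : Attr A F (f (x :: t)) := ⟨o', hAy⟩
      have hrk : rank A F (f (x :: t)) < rank A F x := lt_of_le_of_lt (rank_le hAy) ho'
      have hvalid' : A.ValidUpTo f g s0 (n + 1) :=
        valid_succ hvalid (Or.inl ⟨hcur ▸ h1, by rw [hcur, hc1]; exact hry⟩)
      exact IH (rank A F (f (x :: t))) (hro ▸ hrk) (f (x :: t)) hAty rfl f hf (n + 1) hc1 hvalid'

end Stmt2Aux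

/-- Memoryless determinacy for Player 2 in reachability games:
if Player 2 has a winning strategy from `s0` to reach `F`, then Player 2 has a
memoryless winning strategy from `s0`. -/
theorem stmt2 {S : Type*} (A : Arena S) (F : Set S) (s0 : S)
    -- the configurations are partitioned between the two players
    (hcover : A.V1 ∪ A.V2 = Set.univ) (hdisj : A.V1 ∩ A.V2 = ∅)
    (hpre1 : ∀ x y, A.r1 x y → x ∈ A.V1) (hpre2 : ∀ x y, A.r2 x y → x ∈ A.V2)
    (hwin : ∃ g, A.P2WinsFrom g F s0) :
    ∃ g, Arena.Memoryless g ∧ A.P2WinsFrom g F s0 := by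
  have hattr := Stmt2Aux.attr_of_win A F s0 hdisj hwin
  refine ⟨Stmt2Aux.g0 A F s0, Stmt2Aux.g0_memoryless A F s0, Stmt2Aux.g0_legal2 A F s0, ?_⟩
  intro f hf
  exact Stmt2Aux.g0_wins A F s0 s0 hdisj (Stmt2Aux.rank A F s0) s0 hattr rfl f hf 0 rfl
    (fun k hk => absurd hk (Nat.not_lt_zero k))
end

section
/- With the notation of disjunctive advice bits: if ⟨A, (B_j, ≺_j)_{j∈J}⟩ satisfies (D1)–(D5), each ≺_j is well-founded, and each B_j ⊆ A, then the combined relation ≺ (comparing first by idx, then by ≺_j within equal index j) satisfies the monolithic progress condition (L4): for every x ∈ A\F and every y ∈ S\F with x →₁ y, there exists z ∈ A with y →₂ z and z ≺ x. -/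
/-- Disjunctive advice bits satisfying (D1)–(D5), with each `prec j`
well-founded and each `B j ⊆ Adv`, combine into a monolithic progress relation
`cprec` satisfying the progress condition (L4): for every `x ∈ Adv \ F` and every
`y ∉ F` with `x →₁ y`, there is `z ∈ Adv` with `y →₂ z` and `cprec z x`. -/
theorem stmt6 {S J : Type*} [LinearOrder J] [Nonempty J]
    (hwo : WellFounded ((· < ·) : J → J → Prop))
    (A : Arena S) (I0 F : Set S)
    (Adv : Set S) (B : J → Set S) (prec : J → S → S → Prop)
    -- (D1)
    (hD1 : I0 ⊆ Adv)
    -- (D2) Adv is →-inductive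
    (hD2 : ∀ x y, x ∈ Adv → x ∉ F → A.step x y → y ∈ Adv)
    -- (D3) Adv is covered by the B j and F
    (hD3 : Adv ⊆ F ∪ ⋃ j, B j)
    -- (D4) each prec j is a strict preorder
    (hD4 : ∀ j, Irreflexive (prec j) ∧ Transitive (prec j))
    -- (D5) progress from B j following prec j
    (hD5 : ∀ j x, x ∈ Adv ∩ B j → x ∉ F → (∀ i, i < j → x ∉ B i) →
      ∀ y, y ∉ F → A.r1 x y → ∃ z ∈ B j, A.r2 y z ∧ prec j z x)
    -- each prec j is well-founded
    (hwfp : ∀ j, WellFounded (prec j))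
    -- each B j is contained in Adv
    (hBA : ∀ j, B j ⊆ Adv)
    -- idx x = min {j | x ∈ B j} (= min J if no such j exists)
    (idx : S → J)
    (hidx₁ : ∀ x j, x ∈ B j → idx x ≤ j)
    (hidx₂ : ∀ x, (∃ j, x ∈ B j) → x ∈ B (idx x))
    (hidx₃ : ∀ x, (¬ ∃ j, x ∈ B j) → ∀ j, idx x ≤ j)
    -- the combined relation
    (cprec : S → S → Prop)
    (hc : ∀ x y, cprec x y ↔ (idx x < idx y ∨ (idx x = idx y ∧ prec (idx x) x y))) :
    ∀ x, x ∈ Adv → x ∉ F → ∀ y, y ∉ F → A.r1 x y →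
      ∃ z, z ∈ Adv ∧ A.r2 y z ∧ cprec z x := by
  intro x hxA hxF y hyF hxy
  have hxB : ∃ j, x ∈ B j := by
    rcases hD3 hxA with h | h
    · exact absurd h hxF
    · simpa using h
  have hx : x ∈ B (idx x) := hidx₂ x hxB
  have hmin : ∀ i, i < idx x → x ∉ B i := fun i hi hxi =>
    absurd (hidx₁ x i hxi) (not_le_of_gt hi)
  obtain ⟨z, hzB, hr2, hp⟩ := hD5 (idx x) x ⟨hxA, hx⟩ hxF hmin y hyF hxy
  refine ⟨z, hBA _ hzB, hr2, ?_⟩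
  rw [hc]
  rcases lt_or_eq_of_le (hidx₁ z (idx x) hzB) with h | h
  · exact Or.inl h
  · exact Or.inr ⟨h, h ▸ hp⟩
end

section
/- Let ⟨A, ≻⟩ be advice bits satisfying (L1)–(L4) for a length-preserving arena over a finite alphabet, where ≻ is given by a length-preserving, irreflexive, transitive relation. Then every play from a configuration s₀ ∈ post_{→*}(I₀) in which Player 2 always responds with a move y →₂ z satisfying z ∈ A and (previous Player-1 predecessor) x ≻ z, against any Player-1 strategy, is finite and ends in F. -/
/-- Let `⟨Adv, succ⟩` be advice bits satisfying (L1)–(L4) for a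
length-preserving arena over a finite alphabet, with `succ` length-preserving,
irreflexive and transitive. Then every play from a configuration
`s0 ∈ post_{→*}(I0)` in which Player 2 always responds with a move `y →₂ z` such
that `z ∈ Adv` and `x ≻ z` (where `x` is the previous Player-1 configuration),
against any Player-1 strategy, is finite and ends in `F`.  We record the
successive Player-1 configurations of such a play as a sequence `x : ℕ → List A`
and conclude that `F` is reached after finitely many rounds. -/
theorem stmt15 {A : Type*} [Fintype A] (G : Arena (List A)) (I0 F : Set (List A))
    (hcover : G.V1 ∪ G.V2 = Set.univ) (hdisj : G.V1 ∩ G.V2 = ∅)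
    (hpre1 : ∀ u v, G.r1 u v → u ∈ G.V1) (hpre2 : ∀ u v, G.r2 u v → u ∈ G.V2)
    (halt1 : ∀ u v, G.r1 u v → v ∉ G.V1) (halt2 : ∀ u v, G.r2 u v → v ∉ G.V2)
    (hI0 : I0 ⊆ G.V1) (hF : F ⊆ G.V1)
    (hnd : ∀ u, u ∉ F → ∃ v, G.step u v)
    -- the arena is length-preserving
    (hlen1 : ∀ u v, G.r1 u v → u.length = v.length)
    (hlen2 : ∀ u v, G.r2 u v → u.length = v.length)
    -- advice bits
    (Adv : Set (List A)) (succ : List A → List A → Prop)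
    (hL1 : I0 ⊆ Adv)
    (hL2 : ∀ u v, u ∈ Adv → G.step u v → v ∈ Adv)
    (hirr : Irreflexive succ) (htrans : Transitive succ)
    (hsucclen : ∀ u v, succ u v → u.length = v.length)
    (hL4 : ∀ u, u ∈ Adv → u ∉ F → ∀ v, G.r1 u v → v ∉ F →
      ∃ z, G.r2 v z ∧ z ∈ Adv ∧ succ u z)
    -- a play following the advice, recorded by its Player-1 configurations
    (s0 : List A) (hreach : ∃ u ∈ I0, Relation.ReflTransGen G.step u s0)
    (x : ℕ → List A) (hx0 : x 0 = s0)
    (hplay : ∀ k, (∀ j ≤ k, x j ∉ F) →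
      ∃ y, G.r1 (x k) y ∧ G.r2 y (x (k + 1)) ∧ x (k + 1) ∈ Adv ∧ succ (x k) (x (k + 1))) :
    ∃ n, x n ∈ F := by
  by_contra h
  push_neg at h
  have hnotF : ∀ j, x j ∉ F := h
  have hsucc : ∀ k, succ (x k) (x (k + 1)) := by
    intro k
    obtain ⟨y, -, -, -, hs⟩ := hplay k (fun j _ => hnotF j)
    exact hs
  have hmono : ∀ i j, i < j → succ (x i) (x j) := by
    intro i j hij
    induction j with
    | zero => omega
    | succ n ih =>
      rcases Nat.lt_succ_iff_lt_or_eq.mp hij with h' | h'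
      · exact htrans (ih h') (hsucc n)
      · rw [h']; exact hsucc n
  have hinj : Function.Injective x := by
    intro i j hij
    by_contra hne
    rcases Nat.lt_or_ge i j with h' | h'
    · exact hirr (x i) (hij ▸ hmono i j h')
    · have : i ≠ j := hne
      have : j < i := lt_of_le_of_ne h' (Ne.symm hne)
      exact hirr (x j) (hij ▸ hmono j i this)
  have hlen : ∀ k, (x k).length = (x 0).length := by
    intro k
    induction k with
    | zero => rfl
    | succ n ih => rw [← ih]; exact (hsucclen _ _ (hsucc n)).symm
  have hfin : {l : List A | l.length = (x 0).length}.Finite :=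
    List.finite_length_eq A (x 0).length
  have hinf : {l : List A | l.length = (x 0).length}.Infinite :=
    Set.infinite_of_injective_forall_mem hinj (fun k => hlen k)
  exact hinf hfin
end

section
/- Let T be the forest of all plays consistent with a memoryless winning strategy g of Player 2 from the set A = post_{→*}(I₀), for the reachability objective F. Define a relation R on Player-1 configurations by (v, v') ∈ R iff some play in T visits v strictly before v'. Then R is a strict preorder (transitive and irreflexive). -/
namespace Arena
variable {S : Type*}
open Classical

lemma play_hist (A : Arena S) (f g : Strat S) (s0 : S) :
    ∀ n, ∃ t : List S, (A.play f g s0 n).2 = (A.play f g s0 n).1 :: t ∧ t.length = n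
  | 0 => ⟨[], rfl, rfl⟩
  | n + 1 => by
    obtain ⟨t, ht, hl⟩ := play_hist A f g s0 n
    exact ⟨(A.play f g s0 n).2, rfl, by rw [ht]; simp [hl]⟩

lemma play_head (A : Arena S) (f g : Strat S) (s0 : S) (n : ℕ) :
    (A.play f g s0 n).2.head? = some (A.play f g s0 n).1 := by
  obtain ⟨t, ht, -⟩ := A.play_hist f g s0 n
  rw [ht]; rfl

lemma play_succ (A : Arena S) (f g : Strat S) (s0 : S) (n : ℕ) :
    (A.play f g s0 (n + 1)).1 =
      if (A.play f g s0 n).1 ∈ A.V1 then f (A.play f g s0 n).2 else g (A.play f g s0 n).2 := rfl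

noncomputable def mimic (A : Arena S) (tgt : ℕ → S × List S) (ts : ℕ → Strat S)
    (fb : Strat S) : Strat S := fun h =>
  match h with
  | [] => fb []
  | x :: t =>
    if (tgt t.length).2.head? = some x then ts t.length ((tgt t.length).2)
    else if hy : ∃ y, A.r1 x y then Classical.choose hy else fb (x :: t)

lemma mimic_legal (A : Arena S) (tgt : ℕ → S × List S) (ts : ℕ → Strat S) (fb : Strat S)
    (hts : ∀ k, A.Legal1 (ts k)) : A.Legal1 (A.mimic tgt ts fb) := by
  intro x h hx hy
  show A.r1 x (if (tgt h.length).2.head? = some x then ts h.length ((tgt h.length).2)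
    else if hy : ∃ y, A.r1 x y then Classical.choose hy else fb (x :: h))
  by_cases hc : (tgt h.length).2.head? = some x
  · rw [if_pos hc]
    obtain ⟨t', ht'⟩ : ∃ t', (tgt h.length).2 = x :: t' := by
      cases h' : (tgt h.length).2 with
      | nil => simp [h'] at hc
      | cons a t =>
        rw [h'] at hc
        simp only [List.head?_cons, Option.some.injEq] at hc
        subst hc; exact ⟨t, rfl⟩
    rw [ht']; exact hts _ x t' hx hy
  · rw [if_neg hc, dif_pos hy]; exact Classical.choose_spec hy

lemma mimic_cur (A : Arena S) (tgt : ℕ → S × List S) (ts : ℕ → Strat S) (fb : Strat S)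
    (g : Strat S) (hmem : Memoryless g) (s0 : S) (h0 : (tgt 0).1 = s0)
    (H1 : ∀ j, (tgt j).2.head? = some (tgt j).1)
    (H2 : ∀ j, (tgt j).1 ∈ A.V1 → ts j ((tgt j).2) = (tgt (j + 1)).1)
    (H3 : ∀ j, (tgt j).1 ∉ A.V1 → g ((tgt j).2) = (tgt (j + 1)).1) :
    ∀ j, A.cur (A.mimic tgt ts fb) g s0 j = (tgt j).1 := by
  intro j
  induction j with
  | zero => exact h0.symm
  | succ j ih =>
    obtain ⟨t, ht, hl⟩ := A.play_hist (A.mimic tgt ts fb) g s0 j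
    have ih' : (A.play (A.mimic tgt ts fb) g s0 j).1 = (tgt j).1 := ih
    show (A.play (A.mimic tgt ts fb) g s0 (j + 1)).1 = _
    rw [play_succ]
    by_cases hv : (A.play (A.mimic tgt ts fb) g s0 j).1 ∈ A.V1
    · rw [if_pos hv, ht]
      show (if (tgt t.length).2.head? = some (A.play (A.mimic tgt ts fb) g s0 j).1
          then ts t.length ((tgt t.length).2)
          else _) = _
      rw [hl, ih', if_pos (H1 j)]
      exact H2 j (ih' ▸ hv)
    · rw [if_neg hv]
      rw [hmem _ ((tgt j).2) (by rw [ht, ih']; exact (H1 j).symm)]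
      exact H3 j (ih' ▸ hv)

end Arena

/-- Let `g` be a memoryless winning strategy of Player 2 from
every reachable Player-1 configuration (the set `post_{→*}(I0)`), and let `R` relate
two Player-1 configurations `v, v'` iff some play consistent with `g` from a
reachable configuration visits `v` strictly before `v'`. Then `R` is a strict
preorder (transitive and irreflexive). -/
theorem stmt17 {S : Type*} (A : Arena S) (I0 F : Set S)
    (hcover : A.V1 ∪ A.V2 = Set.univ) (hdisj : A.V1 ∩ A.V2 = ∅)
    (hpre1 : ∀ x y, A.r1 x y → x ∈ A.V1) (hpre2 : ∀ x y, A.r2 x y → x ∈ A.V2)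
    (hI0 : I0 ⊆ A.V1) (hF : F ⊆ A.V1)
    (g : Arena.Strat S) (hmem : Arena.Memoryless g)
    (hwin : ∀ s, (∃ u ∈ I0, Relation.ReflTransGen A.step u s) → s ∈ A.V1 →
      A.P2WinsFrom g F s)
    (R : S → S → Prop)
    (hR : ∀ v w, R v w ↔ (v ∈ A.V1 ∧ w ∈ A.V1 ∧
      ∃ s0, (∃ u ∈ I0, Relation.ReflTransGen A.step u s0) ∧
        ∃ f, A.Legal1 f ∧ ∃ m n, m < n ∧ A.ValidUpTo f g s0 n ∧
          (∀ k < n, A.cur f g s0 k ∉ F) ∧ A.cur f g s0 m = v ∧ A.cur f g s0 n = w)) :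
    Transitive R ∧ Irreflexive R := by
  classical
  constructor
  · intro a b c hab hbc
    rw [hR] at hab hbc
    rw [hR]
    obtain ⟨ha1, hb1, s0, hreach, f, hf, m, n, hmn, hvalid, hFn, hm, hn⟩ := hab
    obtain ⟨-, hc1, s0', hreach', f', hf', m', n', hmn', hvalid', hFn', hm', hn'⟩ := hbc
    refine ⟨ha1, hc1, s0, hreach, ?_⟩
    set tgt : ℕ → S × List S := fun k =>
      if k < n then A.play f g s0 k else A.play f' g s0' (m' + (k - n)) with htgt
    set ts : ℕ → Arena.Strat S := fun k => if k < n then f else f' with hts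
    have hts_leg : ∀ k, A.Legal1 (ts k) := by
      intro k; by_cases h : k < n <;> simp [hts, h, hf, hf']
    have hbn : (A.play f g s0 n).1 = (A.play f' g s0' m').1 := by
      show A.cur f g s0 n = A.cur f' g s0' m'
      rw [hn, hm']
    have H1 : ∀ j, (tgt j).2.head? = some (tgt j).1 := by
      intro j; by_cases h : j < n <;> simp [htgt, h, Arena.play_head]
    have H2 : ∀ j, (tgt j).1 ∈ A.V1 → ts j ((tgt j).2) = (tgt (j + 1)).1 := by
      intro j hj
      by_cases h : j < n
      · simp only [htgt, hts, if_pos h] at hj ⊢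
        by_cases h' : j + 1 < n
        · rw [if_pos h', Arena.play_succ, if_pos hj]
        · have hjn : j + 1 = n := by omega
          rw [if_neg h', hjn, show m' + (n - n) = m' from by omega]
          calc f (A.play f g s0 j).2 = (A.play f g s0 (j + 1)).1 := by
                rw [Arena.play_succ, if_pos hj]
            _ = (A.play f' g s0' m').1 := by rw [hjn]; exact hbn
      · have h' : ¬ (j + 1 < n) := by omega
        simp only [htgt, hts, if_neg h, if_neg h'] at hj ⊢
        rw [show m' + (j + 1 - n) = m' + (j - n) + 1 from by omega,
          Arena.play_succ, if_pos hj]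
    have H3 : ∀ j, (tgt j).1 ∉ A.V1 → g ((tgt j).2) = (tgt (j + 1)).1 := by
      intro j hj
      by_cases h : j < n
      · simp only [htgt, if_pos h] at hj ⊢
        by_cases h' : j + 1 < n
        · rw [if_pos h', Arena.play_succ, if_neg hj]
        · have hjn : j + 1 = n := by omega
          rw [if_neg h', hjn, show m' + (n - n) = m' from by omega]
          calc g (A.play f g s0 j).2 = (A.play f g s0 (j + 1)).1 := by
                rw [Arena.play_succ, if_neg hj]
            _ = (A.play f' g s0' m').1 := by rw [hjn]; exact hbn
      · have h' : ¬ (j + 1 < n) := by omega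
        simp only [htgt, if_neg h, if_neg h'] at hj ⊢
        rw [show m' + (j + 1 - n) = m' + (j - n) + 1 from by omega,
          Arena.play_succ, if_neg hj]
    have h0 : (tgt 0).1 = s0 := by
      simp only [htgt, if_pos (show 0 < n from by omega)]
      rfl
    have hsim := A.mimic_cur tgt ts f g hmem s0 h0 H1 H2 H3
    have htv1 : ∀ k, k < n → (tgt k).1 = A.cur f g s0 k := by
      intro k hk; simp only [htgt, if_pos hk]; rfl
    have htv2 : ∀ k, ¬ k < n → (tgt k).1 = A.cur f' g s0' (m' + (k - n)) := by
      intro k hk; simp only [htgt, if_neg hk]; rfl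
    refine ⟨A.mimic tgt ts f, A.mimic_legal _ _ _ hts_leg, m, n + (n' - m'),
      by omega, ?_, ?_, ?_, ?_⟩
    · intro k hk
      rw [hsim k, hsim (k + 1)]
      by_cases h : k < n
      · rw [htv1 k h]
        by_cases h' : k + 1 < n
        · rw [htv1 (k + 1) h']
          exact hvalid k h
        · have hjn : k + 1 = n := by omega
          rw [htv2 (k + 1) h', hjn, show m' + (n - n) = m' from by omega]
          show A.StepOK _ ((A.play f' g s0' m').1)
          rw [← hbn]
          have := hvalid k h
          rw [hjn] at this
          exact this
      · have h' : ¬ (k + 1 < n) := by omega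
        rw [htv2 k h, htv2 (k + 1) h',
          show m' + (k + 1 - n) = m' + (k - n) + 1 from by omega]
        exact hvalid' (m' + (k - n)) (by omega)
    · intro k hk
      rw [hsim k]
      by_cases h : k < n
      · rw [htv1 k h]; exact hFn k h
      · rw [htv2 k h]; exact hFn' (m' + (k - n)) (by omega)
    · rw [hsim m, htv1 m hmn]; exact hm
    · rw [hsim, htv2 (n + (n' - m')) (by omega),
        show m' + (n + (n' - m') - n) = n' from by omega]
      exact hn'
  · intro a ha
    rw [hR] at ha
    obtain ⟨ha1, -, s0, ⟨u, hu, hus⟩, f, hf, m, n, hmn, hvalid, hFn, hm, hn⟩ := ha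
    have hdpos : 0 < n - m := by omega
    set d := n - m with hdd
    have hstep : ∀ k, k ≤ n → Relation.ReflTransGen A.step s0 (A.cur f g s0 k) := by
      intro k
      induction k with
      | zero => intro _; exact Relation.ReflTransGen.refl
      | succ k ih =>
        intro hk
        refine (ih (by omega)).tail ?_
        rcases hvalid k (by omega) with ⟨-, h1⟩ | ⟨-, h2⟩
        · exact Or.inl h1
        · exact Or.inr h2
    have hra : Relation.ReflTransGen A.step u a :=
      hus.trans (hm ▸ hstep m (le_of_lt hmn))
    obtain ⟨-, hw⟩ := hwin a ⟨u, hu, hra⟩ ha1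
    set tgt : ℕ → S × List S := fun j => A.play f g s0 (m + j % d) with htgt
    have hcurn : (A.play f g s0 n).1 = (A.play f g s0 m).1 := by
      show A.cur f g s0 n = A.cur f g s0 m
      rw [hm, hn]
    have hmod : ∀ j : ℕ, (j + 1) % d = if j % d + 1 = d then 0 else j % d + 1 := by
      intro j
      rw [← Nat.mod_add_mod]
      by_cases hc : j % d + 1 = d
      · rw [if_pos hc, hc, Nat.mod_self]
      · have : j % d + 1 < d := by
          have := Nat.mod_lt j (show 0 < d from hdpos)
          omega
        rw [if_neg hc, Nat.mod_eq_of_lt this]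
    have H1 : ∀ j, (tgt j).2.head? = some (tgt j).1 := fun j => A.play_head f g s0 _
    have H2 : ∀ j, (tgt j).1 ∈ A.V1 → f ((tgt j).2) = (tgt (j + 1)).1 := by
      intro j hj
      simp only [htgt] at hj ⊢
      rw [hmod j]
      by_cases hc : j % d + 1 = d
      · rw [if_pos hc, Nat.add_zero]
        calc f (A.play f g s0 (m + j % d)).2 = (A.play f g s0 (m + j % d + 1)).1 := by
              rw [Arena.play_succ, if_pos hj]
          _ = (A.play f g s0 m).1 := by
              rw [show m + j % d + 1 = n from by omega]; exact hcurn
      · rw [if_neg hc, show m + (j % d + 1) = m + j % d + 1 from by omega,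
          Arena.play_succ, if_pos hj]
    have H3 : ∀ j, (tgt j).1 ∉ A.V1 → g ((tgt j).2) = (tgt (j + 1)).1 := by
      intro j hj
      simp only [htgt] at hj ⊢
      rw [hmod j]
      by_cases hc : j % d + 1 = d
      · rw [if_pos hc, Nat.add_zero]
        calc g (A.play f g s0 (m + j % d)).2 = (A.play f g s0 (m + j % d + 1)).1 := by
              rw [Arena.play_succ, if_neg hj]
          _ = (A.play f g s0 m).1 := by
              rw [show m + j % d + 1 = n from by omega]; exact hcurn
      · rw [if_neg hc, show m + (j % d + 1) = m + j % d + 1 from by omega,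
          Arena.play_succ, if_neg hj]
    have h0 : (tgt 0).1 = a := by
      simp only [htgt, Nat.zero_mod, Nat.add_zero]
      exact hm
    have hsim := A.mimic_cur tgt (fun _ => f) f g hmem a h0 H1 H2 H3
    obtain ⟨n0, hval0, hor⟩ :=
      hw (A.mimic tgt (fun _ => f) f) (A.mimic_legal _ _ _ (fun _ => hf))
    have hc0 : A.cur (A.mimic tgt (fun _ => f) f) g a n0 = A.cur f g s0 (m + n0 % d) :=
      hsim n0
    have hlt : m + n0 % d < n := by
      have := Nat.mod_lt n0 (show 0 < d from hdpos)
      omega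
    rcases hor with hin | ⟨hv1, hno⟩
    · rw [hc0] at hin
      exact hFn _ hlt hin
    · rw [hc0] at hv1 hno
      rcases hvalid (m + n0 % d) hlt with ⟨-, h1⟩ | ⟨h2, -⟩
      · exact hno _ h1
      · have : A.cur f g s0 (m + n0 % d) ∈ A.V1 ∩ A.V2 := ⟨hv1, h2⟩
        rw [hdisj] at this
        exact this
end
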